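/- Let φx, φy, α, β be real numbers and set M = exp(−φx•(cos α • X + sin α • Y)) · exp(φy•(cos β • X + sin β • Y)). Then the (1,1) entry of M equals cos(φx/2)·cos(φy/2) + e^{i(α−β)}·sin(φx/2)·sin(φy/2). (Applied with α = θx − zx and β = θy − zx, this gives the equation cos(φ/2)e^{iz/2} = cos(φx/2)cos(φy/2) + e^{i(θx−θy)}sin(φx/2)sin(φy/2) for the cylindrical coordinates (φ,θ,z) of x⁻¹y in SU(2).) -/

import Mathlib

/-!
If `J² = -1` in a normed `ℝ`-algebra, then `I ↦ J` is a continuous algebra map `ℂ → A`, so it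
carries `exp (t I) = cos t + sin t I` to `exp (t J) = cos t + sin t J`. The matrix
`J = 2 (cos α X + sin α Y) = [[0, e^{iα}], [-e^{-iα}, 0]]` squares to `-1`, hence
`exp (φ (cos α X + sin α Y)) = cos (φ/2) + sin (φ/2) J`, and the `(0,0)` entry of a product of
two such matrices is read off directly.
-/

open scoped Matrix

/-- Halved Pauli matrix `X` generating `su(2)`. -/
noncomputable def X : Matrix (Fin 2) (Fin 2) ℂ := (1 / 2 : ℂ) • !![0, 1; -1, 0]

/-- Halved Pauli matrix `Y` generating `su(2)`. -/
noncomputable def Y : Matrix (Fin 2) (Fin 2) ℂ :=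
  (1 / 2 : ℂ) • !![0, Complex.I; Complex.I, 0]

theorem NormedSpace.exp_smul_of_mul_self_eq_neg_one {A : Type*} [NormedRing A]
    [NormedAlgebra ℝ A] {J : A} (hJ : J * J = -1) (t : ℝ) :
    exp (t • J) = Real.cos t • 1 + Real.sin t • J := by
  set f := Complex.liftAux J hJ
  have hf : Continuous f := f.toLinearMap.continuous_of_finiteDimensional
  calc exp (t • J) = f (exp (t * Complex.I)) := by
        rw [map_exp_of_mem_ball (𝕂 := ℝ) f hf _ (by simp [expSeries_radius_eq_top])]
        simp [f, Complex.liftAux_apply]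
    _ = Real.cos t • 1 + Real.sin t • J := by
        rw [← Complex.exp_eq_exp_ℂ, Complex.exp_mul_I]
        simp [f, Complex.liftAux_apply, ← Complex.ofReal_cos, ← Complex.ofReal_sin,
          Algebra.algebraMap_eq_smul_one]

open Complex

noncomputable def xyGenerator (α : ℝ) : Matrix (Fin 2) (Fin 2) ℂ :=
  !![0, exp (α * I); -exp (-(α * I)), 0]

theorem xyGenerator_mul_self (α : ℝ) : xyGenerator α * xyGenerator α = -1 := by
  have h : exp (α * I) * exp (-(α * I)) = 1 := by rw [← exp_add, add_neg_cancel, exp_zero]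
  ext i j
  fin_cases i <;> fin_cases j <;>
    simp [xyGenerator, Matrix.mul_apply, h, mul_comm (exp (-(α * I)))]

theorem two_smul_cos_smul_X_add_sin_smul_Y (α : ℝ) :
    (2 : ℝ) • (Real.cos α • X + Real.sin α • Y) = xyGenerator α := by
  rw [xyGenerator, ← neg_mul, exp_mul_I, exp_mul_I, cos_neg, sin_neg, ← ofReal_cos, ← ofReal_sin]
  ext i j
  fin_cases i <;> fin_cases j <;>
    simp only [X, Y, Fin.zero_eta, Fin.mk_one, Matrix.smul_apply, Matrix.add_apply, Matrix.of_apply,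
      Matrix.cons_val_zero, Matrix.cons_val_one, Matrix.cons_val_fin_one, real_smul, ofReal_ofNat,
      smul_eq_mul] <;>
    ring

theorem exp_smul_cos_smul_X_add_sin_smul_Y (φ α : ℝ) :
    NormedSpace.exp (φ • (Real.cos α • X + Real.sin α • Y)) =
      Real.cos (φ / 2) • 1 + Real.sin (φ / 2) • xyGenerator α := by
  -- `exp` depends only on the topology, so any compatible algebra norm may be chosen here.
  let := Matrix.linftyOpNormedRing (n := Fin 2) (α := ℂ)
  let := Matrix.linftyOpNormedAlgebra (n := Fin 2) (R := ℝ) (α := ℂ)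
  rw [← NormedSpace.exp_smul_of_mul_self_eq_neg_one (xyGenerator_mul_self α),
    ← two_smul_cos_smul_X_add_sin_smul_Y, smul_smul, div_mul_cancel₀ _ two_ne_zero]
  rfl

/-- The (1,1) entry of
`exp(−φx•(cos α • X + sin α • Y)) · exp(φy•(cos β • X + sin β • Y))` equals
`cos(φx/2)cos(φy/2) + e^{i(α−β)} sin(φx/2) sin(φy/2)`. -/
theorem su2_product_entry_one_one (φx φy α β : ℝ) :
    (NormedSpace.exp ((-φx) • (Real.cos α • X + Real.sin α • Y)) *
        NormedSpace.exp (φy • (Real.cos β • X + Real.sin β • Y))) 0 0 =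
      (Real.cos (φx / 2) : ℂ) * (Real.cos (φy / 2) : ℂ) +
        Complex.exp (Complex.I * ((α - β : ℝ) : ℂ)) * (Real.sin (φx / 2) : ℂ) *
          (Real.sin (φy / 2) : ℂ) := by
  have h : exp (I * ((α - β : ℝ) : ℂ)) = exp (α * I) * exp (-(β * I)) := by
    rw [← exp_add]
    congr 1
    push_cast
    ring
  rw [exp_smul_cos_smul_X_add_sin_smul_Y, exp_smul_cos_smul_X_add_sin_smul_Y, h]
  simp only [Matrix.mul_apply, Fin.sum_univ_two, Matrix.add_apply, Matrix.smul_apply,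
    Matrix.one_apply_eq, Matrix.one_apply_ne zero_ne_one, Matrix.one_apply_ne one_ne_zero,
    xyGenerator, Matrix.of_apply, Matrix.cons_val', Matrix.cons_val_zero, Matrix.cons_val_one,
    Matrix.cons_val_fin_one, real_smul, neg_div, Real.cos_neg, Real.sin_neg]
  push_cast
  ring
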